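/- arXiv:0810.5615 — 3 statements merged into one kernel-verified Lean document; each statement's English description precedes it below -/
import Mathlib

section
/- Let n ≥ 2 and let G(n) be the group presented by generators x_1,…,x_{3n} and relations R_orig(n). Then in G(n) the cyclic relation [x_1, x_2, …, x_n, x_{2n}] holds, i.e. x_{2n} x_n ⋯ x_1 = x_1 x_{2n} x_n ⋯ x_2 = ⋯ = x_n ⋯ x_1 x_{2n}. -/
/-- The descending product `X b * X (b-1) * ⋯ * X a` (equal to `1` when `b < a`). -/
def dprod {G : Type*} [Monoid G] (X : ℕ → G) (a b : ℕ) : G :=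
  (((List.range' a (b + 1 - a)).reverse).map X).prod

/-- The set of relators expressing the cyclic system of relations
`[a₁, …, a_k]`, i.e. that all cyclic rotations of the product `a_k ⋯ a₁` are equal. -/
def cycRels {G : Type*} [Group G] (l : List G) : Set G :=
  { r | ∃ k : ℕ, r = (l.rotate k).reverse.prod * (l.reverse.prod)⁻¹ }

/-- The cyclic system of relations `[a₁, …, a_k]` holds in a group:
all cyclic rotations of the product `a_k ⋯ a₁` are equal. -/
def cycHolds {G : Type*} [Group G] (l : List G) : Prop :=
  ∀ k : ℕ, (l.rotate k).reverse.prod = l.reverse.prod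

/-- The `i`-th (1-based) generator of the free group on `Fin N`. -/
def gen (N : ℕ) (i : ℕ) : FreeGroup (Fin N) :=
  if h : 0 < N then FreeGroup.of ⟨(i - 1) % N, Nat.mod_lt _ h⟩ else 1

/-- The relation set `R_orig(n)` on the generators `x₁, …, x₃ₙ`. -/
def Rorig (n : ℕ) : Set (FreeGroup (Fin (3 * n))) :=
  let X : ℕ → FreeGroup (Fin (3 * n)) := gen (3 * n)
  (⋃ i ∈ Set.Icc 1 n, ⋃ j ∈ Set.Icc (n + 1) (2 * n - 1),
      cycRels [X i, (dprod X (n + 1) (j - 1))⁻¹ * X j * dprod X (n + 1) (j - 1)]) ∪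
  cycRels ((List.range' 1 n).map X ++
      [(dprod X (n + 1) (2 * n - 1))⁻¹ * X (2 * n) * dprod X (n + 1) (2 * n - 1)]) ∪
  cycRels ((dprod X 2 (2 * n) * X 1 * (dprod X 2 (2 * n))⁻¹) ::
      (List.range' (2 * n + 1) n).map X) ∪
  (⋃ i ∈ Set.Icc 2 n, ⋃ j ∈ Set.Icc (2 * n + 1) (3 * n),
      cycRels [dprod X (i + 1) (2 * n) * X i * (dprod X (i + 1) (2 * n))⁻¹, X j]) ∪
  (⋃ i ∈ Set.Icc (n + 1) (2 * n), ⋃ j ∈ Set.Icc (2 * n + 2) (3 * n), cycRels [X i, X j]) ∪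
  cycRels ((List.range' (n + 1) n).map X ++ [X (2 * n + 1)])

/-- The image of the `i`-th (1-based) generator `xᵢ` in the presented group
`G(n) = ⟨x₁,…,x₃ₙ ∣ R_orig(n)⟩`. -/
def genG (n : ℕ) (i : ℕ) : PresentedGroup (Rorig n) :=
  PresentedGroup.mk (Rorig n) (gen (3 * n) i)

/-!
Relation (2) is `[x₁, …, xₙ, d⁻¹ x₂ₙ d]` with `d = x₂ₙ₋₁ ⋯ xₙ₊₁`. This `d` is the product of the
conjugated generators occurring in relations (1), so those relations make every `xᵢ` with
`i ≤ n` commute with `d`. Conjugating relation (2) by `d⁻¹` therefore fixes `x₁, …, xₙ` and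
turns it into `[x₁, …, xₙ, x₂ₙ]`.
-/

section CyclicRelations

variable {F G : Type*} [Group F] [Group G]

lemma List.map_reverse_prod {M : Type*} [FunLike M F G] [MonoidHomClass M F G] (f : M)
    (l : List F) :
    (l.map f).reverse.prod = f l.reverse.prod := by
  rw [← List.map_reverse, ← map_list_prod]

lemma cycHolds_map_of_cycRels_subset_ker {f : F →* G} {l : List F} (h : cycRels l ⊆ f.ker) :
    cycHolds (l.map f) := by
  intro k
  have hk := MonoidHom.mem_ker.mp (h ⟨k, rfl⟩)
  rw [map_mul, map_inv, mul_inv_eq_one] at hk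
  rw [← List.map_rotate, List.map_reverse_prod, List.map_reverse_prod, hk]

lemma PresentedGroup.cycHolds_map_mk {α : Type*} {rels : Set (FreeGroup α)}
    {l : List (FreeGroup α)} (h : cycRels l ⊆ rels) :
    cycHolds (l.map (PresentedGroup.mk rels)) :=
  cycHolds_map_of_cycRels_subset_ker fun _ hr => PresentedGroup.one_of_mem (h hr)

lemma cycHolds_map_iff {M : Type*} [FunLike M F G] [MonoidHomClass M F G] {f : M}
    (hf : Function.Injective f) {l : List F} :
    cycHolds (l.map f) ↔ cycHolds l := by
  simp only [cycHolds, ← List.map_rotate, List.map_reverse_prod, hf.eq_iff]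

lemma Commute.of_cycHolds_pair {a b : G} (h : cycHolds [a, b]) : Commute a b := by
  simpa [List.rotate, Commute, SemiconjBy] using h 1

/-- Conjugating the last entry by an element commuting with all the others amounts to
conjugating the whole list, which preserves the cyclic relation. -/
lemma cycHolds_append_conj_iff {A : List G} {d : G} (hA : ∀ a ∈ A, Commute d a) (z : G) :
    cycHolds (A ++ [d⁻¹ * z * d]) ↔ cycHolds (A ++ [z]) := by
  have hconj : (A ++ [z]).map (MulAut.conj d⁻¹) = A ++ [d⁻¹ * z * d] := by
    have hfix : ∀ a ∈ A, MulAut.conj d⁻¹ a = a := fun a ha => by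
      rw [MulAut.conj_apply, inv_inv, (hA a ha).inv_left.eq, inv_mul_cancel_right]
    rw [List.map_append, List.map_congr_left hfix, List.map_id', List.map_singleton,
      MulAut.conj_apply, inv_inv]
  rw [← hconj, cycHolds_map_iff (MulAut.conj d⁻¹).injective]

end CyclicRelations

section DescendingProducts

variable {F G : Type*} [Monoid F] [Monoid G]

lemma map_dprod (f : F →* G) (X : ℕ → F) (a b : ℕ) :
    f (dprod X a b) = dprod (f ∘ X) a b := by
  simp [dprod, map_list_prod, List.map_map]

lemma dprod_of_lt (X : ℕ → G) {a b : ℕ} (h : b < a) : dprod X a b = 1 := by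
  simp [dprod, Nat.sub_eq_zero_of_le h]

lemma dprod_succ (X : ℕ → G) {a b : ℕ} (h : a ≤ b + 1) :
    dprod X a (b + 1) = X (b + 1) * dprod X a b := by
  rw [dprod, dprod, show b + 1 + 1 - a = b + 1 - a + 1 by omega, List.range'_concat]
  simp [show a + (b + 1 - a) = b + 1 by omega]

end DescendingProducts

/-- With `D j = dprod X (a + 1) j`, the product `D b` equals `c (a+1) ⋯ c b`, where
`c j = (D (j-1))⁻¹ * X j * D (j-1)`. -/
lemma Commute.dprod_of_conj {G : Type*} [Group G] {X : ℕ → G} {g : G} {a b : ℕ}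
    (h : ∀ j, a + 1 ≤ j → j ≤ b →
      Commute g ((dprod X (a + 1) (j - 1))⁻¹ * X j * dprod X (a + 1) (j - 1))) :
    Commute g (dprod X (a + 1) b) := by
  induction b with
  | zero => rw [dprod_of_lt X (Nat.succ_pos a)]; exact Commute.one_right g
  | succ b ih =>
    rcases Nat.lt_or_ge b a with hb | hb
    · rw [dprod_of_lt X (by omega)]; exact Commute.one_right g
    · have hstep := h (b + 1) (by omega) le_rfl
      rw [Nat.add_sub_cancel] at hstep
      set D := dprod X (a + 1) b
      rw [dprod_succ X (by omega), show X (b + 1) * D = D * (D⁻¹ * X (b + 1) * D) by group]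
      exact (ih fun j hj hjb => h j hj (by omega)).mul_right hstep

lemma genG_dprod (n a b : ℕ) :
    PresentedGroup.mk (Rorig n) (dprod (gen (3 * n)) a b) = dprod (genG n) a b :=
  map_dprod _ _ a b

lemma genG_commute_conj {n i j : ℕ} (hi : i ∈ Set.Icc 1 n)
    (hj : j ∈ Set.Icc (n + 1) (2 * n - 1)) :
    Commute (genG n i)
      ((dprod (genG n) (n + 1) (j - 1))⁻¹ * genG n j * dprod (genG n) (n + 1) (j - 1)) := by
  have h := PresentedGroup.cycHolds_map_mk (rels := Rorig n) fun r hr =>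
    Or.inl <| Or.inl <| Or.inl <| Or.inl <| Or.inl <|
      Set.mem_iUnion₂.mpr ⟨i, hi, Set.mem_iUnion₂.mpr ⟨j, hj, hr⟩⟩
  simp only [List.map_cons, List.map_nil, map_mul, map_inv, genG_dprod] at h
  exact Commute.of_cycHolds_pair h

lemma genG_cycHolds_conj (n : ℕ) :
    cycHolds ((List.range' 1 n).map (genG n) ++
      [(dprod (genG n) (n + 1) (2 * n - 1))⁻¹ * genG n (2 * n) *
        dprod (genG n) (n + 1) (2 * n - 1)]) := by
  have h := PresentedGroup.cycHolds_map_mk (rels := Rorig n) fun r hr =>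
    Or.inl <| Or.inl <| Or.inl <| Or.inl <| Or.inr hr
  simp only [List.map_append, List.map_map, List.map_cons, List.map_nil, map_mul, map_inv,
    genG_dprod] at h
  exact h

theorem cyclic_relation_in_Gn_general (n : ℕ) :
    cycHolds ((List.range' 1 n).map (genG n) ++ [genG n (2 * n)]) := by
  refine (cycHolds_append_conj_iff ?_ _).mp (genG_cycHolds_conj n)
  simp only [List.mem_map, List.mem_range'_1]
  rintro _ ⟨i, hi, rfl⟩
  refine (Commute.dprod_of_conj fun j hj hj' => genG_commute_conj ⟨?_, ?_⟩ ⟨hj, hj'⟩).symm <;>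
    omega

/-- In `G(n) = ⟨x₁,…,x₃ₙ ∣ R_orig(n)⟩` the cyclic relation `[x₁, x₂, …, xₙ, x₂ₙ]` holds:
`x₂ₙ xₙ ⋯ x₁ = x₁ x₂ₙ xₙ ⋯ x₂ = ⋯ = xₙ ⋯ x₁ x₂ₙ`. -/
theorem cyclic_relation_in_Gn (n : ℕ) (hn : 2 ≤ n) :
    cycHolds ((List.range' 1 n).map (genG n) ++ [genG n (2 * n)]) :=
  cyclic_relation_in_Gn_general n
end

section
/- Let n ≥ 4 and let H(n) be the group presented by generators x_1,…,x_{2n} and relations H_orig(n). Then in H(n): x_{2n-4} x_{2n-1} = x_{2n-1} x_{2n-4}, x_{2n-4} x_{2n} = x_{2n} x_{2n-4}, and the cyclic relation [x_{2n-5}, x_{2n-1}, x_{2n}] holds, i.e. x_{2n} x_{2n-1} x_{2n-5} = x_{2n-1} x_{2n-5} x_{2n} = x_{2n-5} x_{2n} x_{2n-1}. -/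
/-- The index set for the quadruples of type Q2: pairs `(i,j)` with `1 ≤ i < j ≤ n`,
`j - i > 1`, `i ≠ n-1`, `j ≠ n-1` and `(i,j) ≠ (n-2,n)`. -/
def QIdx (n : ℕ) : Set (ℕ × ℕ) :=
  {p | 1 ≤ p.1 ∧ p.1 < p.2 ∧ p.2 ≤ n ∧ 1 < p.2 - p.1 ∧ p.1 ≠ n - 1 ∧ p.2 ≠ n - 1 ∧
       p ≠ (n - 2, n)}

/-- The relation set `H_orig(n)` on the generators `x₁, …, x₂ₙ`. -/
def Horig (n : ℕ) : Set (FreeGroup (Fin (2 * n))) :=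
  let X : ℕ → FreeGroup (Fin (2 * n)) := gen (2 * n)
  -- (Q1)
  (⋃ i ∈ Set.Icc 2 (n - 2),
      (cycRels [X (2 * i), X (2 * n - 3)] ∪ cycRels [X (2 * i - 1), X (2 * n - 3)] ∪
       cycRels [X (2 * i), (X (2 * n - 3))⁻¹ * X (2 * n - 2) * X (2 * n - 3)] ∪
       cycRels [X (2 * i - 1), (X (2 * n - 3))⁻¹ * X (2 * n - 2) * X (2 * n - 3)])) ∪
  -- (Q2)
  (⋃ p ∈ QIdx n,
      (cycRels [X (2 * p.1),
          (dprod X (2 * p.1 + 1) (2 * p.2 - 1))⁻¹ * X (2 * p.2) *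
            dprod X (2 * p.1 + 1) (2 * p.2 - 1)] ∪
       cycRels [X (2 * p.1 - 1),
          (dprod X (2 * p.1) (2 * p.2 - 1))⁻¹ * X (2 * p.2) *
            dprod X (2 * p.1) (2 * p.2 - 1)] ∪
       cycRels [X (2 * p.1),
          (dprod X (2 * p.1 + 1) (2 * p.2 - 2))⁻¹ * X (2 * p.2 - 1) *
            dprod X (2 * p.1 + 1) (2 * p.2 - 2)] ∪
       cycRels [X (2 * p.1 - 1),
          (dprod X (2 * p.1) (2 * p.2 - 2))⁻¹ * X (2 * p.2 - 1) *
            dprod X (2 * p.1) (2 * p.2 - 2)])) ∪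
  -- (T1)
  (cycRels [X 2, X (2 * n - 3)] ∪ cycRels [X 1, X (2 * n - 3)] ∪
   cycRels [X 1, X 2, (X (2 * n - 3))⁻¹ * X (2 * n - 2) * X (2 * n - 3)]) ∪
  -- (T2)
  (⋃ i ∈ Set.Icc 1 (n - 3),
      (cycRels [X (2 * i) * X (2 * i - 1) * (X (2 * i))⁻¹, X (2 * i + 1), X (2 * i + 2)] ∪
       cycRels [X (2 * i), X (2 * i + 2)] ∪ cycRels [X (2 * i), X (2 * i + 1)])) ∪
  -- (T3)
  (cycRels [(X (2 * n - 2) * X (2 * n - 3) * X (2 * n - 4)) * X (2 * n - 5) *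
        (X (2 * n - 2) * X (2 * n - 3) * X (2 * n - 4))⁻¹, X (2 * n - 1), X (2 * n)] ∪
   cycRels [X (2 * n - 4),
      (X (2 * n - 2) * X (2 * n - 3))⁻¹ * X (2 * n) * (X (2 * n - 2) * X (2 * n - 3))] ∪
   cycRels [X (2 * n - 4),
      (X (2 * n - 2) * X (2 * n - 3))⁻¹ * X (2 * n - 1) * (X (2 * n - 2) * X (2 * n - 3))]) ∪
  -- (T4)
  (cycRels [X (2 * n - 2), X (2 * n)] ∪ cycRels [X (2 * n - 3), X (2 * n)] ∪
   cycRels [X (2 * n - 3), X (2 * n - 2), X (2 * n - 1)])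

/-- The simplified (conjugation-free) relation set `H_simp(n)` on the generators `x₁, …, x₂ₙ`. -/
def Hsimp (n : ℕ) : Set (FreeGroup (Fin (2 * n))) :=
  let X : ℕ → FreeGroup (Fin (2 * n)) := gen (2 * n)
  -- (Q1')
  (⋃ i ∈ Set.Icc 2 (n - 2), ⋃ a ∈ ({2 * i - 1, 2 * i} : Set ℕ),
      ⋃ b ∈ ({2 * n - 3, 2 * n - 2} : Set ℕ), cycRels [X a, X b]) ∪
  -- (Q2')
  (⋃ p ∈ QIdx n, ⋃ a ∈ ({2 * p.1 - 1, 2 * p.1} : Set ℕ),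
      ⋃ b ∈ ({2 * p.2 - 1, 2 * p.2} : Set ℕ), cycRels [X a, X b]) ∪
  -- (T1')
  (cycRels [X 1, X (2 * n - 3)] ∪ cycRels [X 2, X (2 * n - 3)] ∪
   cycRels [X 1, X 2, X (2 * n - 2)]) ∪
  -- (T2')
  (⋃ i ∈ Set.Icc 1 (n - 3),
      (cycRels [X (2 * i - 1), X (2 * i + 1), X (2 * i + 2)] ∪
       cycRels [X (2 * i), X (2 * i + 1)] ∪ cycRels [X (2 * i), X (2 * i + 2)])) ∪
  -- (T3')
  (cycRels [X (2 * n - 4), X (2 * n - 1)] ∪ cycRels [X (2 * n - 4), X (2 * n)] ∪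
   cycRels [X (2 * n - 5), X (2 * n - 1), X (2 * n)]) ∪
  -- (T4')
  (cycRels [X (2 * n - 2), X (2 * n)] ∪ cycRels [X (2 * n - 3), X (2 * n)] ∪
   cycRels [X (2 * n - 3), X (2 * n - 2), X (2 * n - 1)])

/-- The image of the `i`-th (1-based) generator `xᵢ` in the presented group
`H(n) = ⟨x₁,…,x₂ₙ ∣ H_orig(n)⟩`. -/
def genH (n : ℕ) (i : ℕ) : PresentedGroup (Horig n) :=
  PresentedGroup.mk (Horig n) (gen (2 * n) i)


/-!
Write `xₖ` for the generator `x_{2n-k}` and `d = x₂ x₃`. By (T4), `x₂` and `x₃` commute with `x₀`,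
and `[x₃, x₂, x₁]` says exactly that `d` commutes with `x₁`; so `d` commutes with `x₀` and `x₁`, the
conjugations by `d` in the last two relations of (T3) disappear, and `x₄` commutes with `x₀` and
`x₁`. Hence `c = d x₄` commutes with `x₀` and `x₁` too, and conjugating the first relation
`[c x₅ c⁻¹, x₁, x₀]` of (T3) by `c⁻¹` gives `[x₅, x₁, x₀]`.
-/

def IsCyclicRel {G : Type*} [Group G] (l : List G) : Prop :=
  ∀ k : ℕ, (l.rotate k).reverse.prod = l.reverse.prod

section IsCyclicRel

variable {G H : Type*} [Group G] [Group H]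

theorem IsCyclicRel.map {F : Type*} [FunLike F G H] [MonoidHomClass F G H] (f : F)
    {l : List G} (h : IsCyclicRel l) : IsCyclicRel (l.map f) := by
  intro k
  rw [← List.map_rotate, ← List.map_reverse, ← List.map_reverse, ← map_list_prod,
    ← map_list_prod, h k]

theorem IsCyclicRel.commute {a b : G} (h : IsCyclicRel [a, b]) : Commute a b :=
  (commute_iff_eq a b).mpr (by simpa [List.rotate] using h 1)

theorem IsCyclicRel.eq_and_eq {a b c : G} (h : IsCyclicRel [a, b, c]) :
    c * b * a = b * a * c ∧ b * a * c = a * c * b := by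
  have h1 := h 1
  have h2 := h 2
  simp only [List.rotate_cons_succ, List.rotate_zero, List.reverse_cons, List.reverse_nil,
    List.nil_append, List.cons_append, List.prod_cons, List.prod_nil, mul_one, ← mul_assoc]
    at h1 h2
  exact ⟨h2.symm, h2.trans h1.symm⟩

theorem IsCyclicRel.of_conj_head {a b c g : G} (hb : Commute g b) (hc : Commute g c)
    (h : IsCyclicRel [g * a * g⁻¹, b, c]) : IsCyclicRel [a, b, c] := by
  have := h.map (MulAut.conj g⁻¹)
  simpa only [List.map_cons, List.map_nil, MulAut.conj_apply, inv_inv, hb.inv_mul_cancel,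
    hc.inv_mul_cancel, mul_assoc, inv_mul_cancel_left, inv_mul_cancel, mul_one] using this

theorem simplified_T3_of_T3_T4 {x₀ x₁ x₂ x₃ x₄ x₅ : G}
    (h₂₀ : Commute x₂ x₀) (h₃₀ : Commute x₃ x₀) (h₃₂₁ : IsCyclicRel [x₃, x₂, x₁])
    (h₅₁₀ : IsCyclicRel [x₂ * x₃ * x₄ * x₅ * (x₂ * x₃ * x₄)⁻¹, x₁, x₀])
    (h₄₀ : Commute x₄ ((x₂ * x₃)⁻¹ * x₀ * (x₂ * x₃)))
    (h₄₁ : Commute x₄ ((x₂ * x₃)⁻¹ * x₁ * (x₂ * x₃))) :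
    Commute x₄ x₁ ∧ Commute x₄ x₀ ∧ IsCyclicRel [x₅, x₁, x₀] := by
  have hd₀ : Commute (x₂ * x₃) x₀ := h₂₀.mul_left h₃₀
  have hd₁ : Commute (x₂ * x₃) x₁ := by
    rw [commute_iff_eq, ← mul_assoc]
    exact h₃₂₁.eq_and_eq.1.symm
  rw [hd₀.inv_mul_cancel] at h₄₀
  rw [hd₁.inv_mul_cancel] at h₄₁
  exact ⟨h₄₁, h₄₀, IsCyclicRel.of_conj_head (hd₁.mul_left h₄₁) (hd₀.mul_left h₄₀) h₅₁₀⟩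

end IsCyclicRel

theorem PresentedGroup.isCyclicRel_map_mk {α : Type*} {rels : Set (FreeGroup α)}
    {l : List (FreeGroup α)} (h : cycRels l ⊆ rels) :
    IsCyclicRel (l.map (PresentedGroup.mk rels)) := by
  intro k
  rw [← List.map_rotate, ← List.map_reverse, ← List.map_reverse, ← map_list_prod,
    ← map_list_prod]
  exact PresentedGroup.mk_eq_mk_of_mul_inv_mem (h ⟨k, rfl⟩)

theorem genH_relations_T4 (n : ℕ) :
    Commute (genH n (2 * n - 2)) (genH n (2 * n)) ∧
    Commute (genH n (2 * n - 3)) (genH n (2 * n)) ∧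
    IsCyclicRel [genH n (2 * n - 3), genH n (2 * n - 2), genH n (2 * n - 1)] := by
  set X := gen (2 * n)
  have rel (l) (hl : cycRels l ⊆ Horig n) := PresentedGroup.isCyclicRel_map_mk hl
  refine ⟨(rel [X (2 * n - 2), X (2 * n)] ?_).commute,
    (rel [X (2 * n - 3), X (2 * n)] ?_).commute,
    rel [X (2 * n - 3), X (2 * n - 2), X (2 * n - 1)] ?_⟩ <;>
  · intro r hr
    simp only [Horig, Set.mem_union]
    tauto

theorem genH_relations_T3 (n : ℕ) :
    IsCyclicRel [genH n (2 * n - 2) * genH n (2 * n - 3) * genH n (2 * n - 4) *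
        genH n (2 * n - 5) * (genH n (2 * n - 2) * genH n (2 * n - 3) * genH n (2 * n - 4))⁻¹,
      genH n (2 * n - 1), genH n (2 * n)] ∧
    Commute (genH n (2 * n - 4))
      ((genH n (2 * n - 2) * genH n (2 * n - 3))⁻¹ * genH n (2 * n) *
        (genH n (2 * n - 2) * genH n (2 * n - 3))) ∧
    Commute (genH n (2 * n - 4))
      ((genH n (2 * n - 2) * genH n (2 * n - 3))⁻¹ * genH n (2 * n - 1) *
        (genH n (2 * n - 2) * genH n (2 * n - 3))) := by
  set X := gen (2 * n)
  have rel (l) (hl : cycRels l ⊆ Horig n) := PresentedGroup.isCyclicRel_map_mk hl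
  have h₅₁₀ := rel [X (2 * n - 2) * X (2 * n - 3) * X (2 * n - 4) * X (2 * n - 5) *
    (X (2 * n - 2) * X (2 * n - 3) * X (2 * n - 4))⁻¹, X (2 * n - 1), X (2 * n)] ?_
  have h₄₀ := rel [X (2 * n - 4),
    (X (2 * n - 2) * X (2 * n - 3))⁻¹ * X (2 * n) * (X (2 * n - 2) * X (2 * n - 3))] ?_
  have h₄₁ := rel [X (2 * n - 4),
    (X (2 * n - 2) * X (2 * n - 3))⁻¹ * X (2 * n - 1) * (X (2 * n - 2) * X (2 * n - 3))] ?_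
  · simp only [List.map_cons, List.map_nil, map_mul, map_inv] at h₅₁₀ h₄₀ h₄₁
    exact ⟨h₅₁₀, h₄₀.commute, h₄₁.commute⟩
  all_goals
    intro r hr
    simp only [Horig, Set.mem_union]
    tauto

theorem T3_simplified_general (n : ℕ) :
    genH n (2 * n - 4) * genH n (2 * n - 1) = genH n (2 * n - 1) * genH n (2 * n - 4) ∧
    genH n (2 * n - 4) * genH n (2 * n) = genH n (2 * n) * genH n (2 * n - 4) ∧
    genH n (2 * n) * genH n (2 * n - 1) * genH n (2 * n - 5) =
      genH n (2 * n - 1) * genH n (2 * n - 5) * genH n (2 * n) ∧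
    genH n (2 * n - 1) * genH n (2 * n - 5) * genH n (2 * n) =
      genH n (2 * n - 5) * genH n (2 * n) * genH n (2 * n - 1) := by
  obtain ⟨h₂₀, h₃₀, h₃₂₁⟩ := genH_relations_T4 n
  obtain ⟨h₅₁₀, h₄₀, h₄₁⟩ := genH_relations_T3 n
  obtain ⟨h₄₁', h₄₀', h₅₁₀'⟩ := simplified_T3_of_T3_T4 h₂₀ h₃₀ h₃₂₁ h₅₁₀ h₄₀ h₄₁
  exact ⟨h₄₁', h₄₀', h₅₁₀'.eq_and_eq⟩

/-- In `H(n) = ⟨x₁,…,x₂ₙ ∣ H_orig(n)⟩`: `x₂ₙ₋₄` commutes with `x₂ₙ₋₁` and with `x₂ₙ`, and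
the cyclic relation `[x₂ₙ₋₅, x₂ₙ₋₁, x₂ₙ]` holds:
`x₂ₙ x₂ₙ₋₁ x₂ₙ₋₅ = x₂ₙ₋₁ x₂ₙ₋₅ x₂ₙ = x₂ₙ₋₅ x₂ₙ x₂ₙ₋₁`. -/
theorem T3_simplified (n : ℕ) (hn : 4 ≤ n) :
    genH n (2 * n - 4) * genH n (2 * n - 1) = genH n (2 * n - 1) * genH n (2 * n - 4) ∧
    genH n (2 * n - 4) * genH n (2 * n) = genH n (2 * n) * genH n (2 * n - 4) ∧
    genH n (2 * n) * genH n (2 * n - 1) * genH n (2 * n - 5) =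
      genH n (2 * n - 1) * genH n (2 * n - 5) * genH n (2 * n) ∧
    genH n (2 * n - 1) * genH n (2 * n - 5) * genH n (2 * n) =
      genH n (2 * n - 5) * genH n (2 * n) * genH n (2 * n - 1) :=
  T3_simplified_general n
end

section
/- Let n ≥ 4 and let H(n) be the group presented by generators x_1,…,x_{2n} and relations H_orig(n). Then in H(n), for all 1 ≤ i < j ≤ n−2 with j−i ≥ 2, each of x_{2i-1} and x_{2i} commutes with each of x_{2j-1} and x_{2j}. -/
section Group

variable {G : Type*} [Group G]

theorem Commute.of_commute_conj {g z W : G} (hW : Commute g W)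
    (h : Commute g (W⁻¹ * z * W)) : Commute g z := by
  simpa [mul_assoc] using hW.mul_right (h.mul_right hW.inv_right)

theorem Commute.of_commute_conj_of_conj_commute {x y z U V : G}
    (hV : Commute (y * x * y⁻¹) V) (hxU : Commute x U) (hyU : Commute y U) (hyz : Commute y z)
    (h : Commute x ((U * (V * y))⁻¹ * z * (U * (V * y)))) : Commute x z := by
  have hU : Commute (y * x * y⁻¹) U := (hyU.mul_left hxU).mul_left hyU.inv_left
  have hconj : U * (V * y) * x * (U * (V * y))⁻¹ = y * x * y⁻¹ := by
    calc U * (V * y) * x * (U * (V * y))⁻¹ = U * (V * (y * x * y⁻¹) * V⁻¹) * U⁻¹ := by group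
      _ = y * x * y⁻¹ := by rw [hV.symm.mul_inv_cancel, hU.symm.mul_inv_cancel]
  have h' := (Commute.conj_iff (U * (V * y))).2 h
  rwa [hconj, show U * (V * y) * ((U * (V * y))⁻¹ * z * (U * (V * y))) * (U * (V * y))⁻¹ = z by
    group, ← hyz.mul_inv_cancel, Commute.conj_iff] at h'

end Group

section Dprod

variable {M : Type*} [Monoid M] (X : ℕ → M)

theorem dprod_eq_mul_dprod {a b c : ℕ} (hac : a ≤ c + 1) (hcb : c ≤ b) :
    dprod X a b = dprod X (c + 1) b * dprod X a c := by
  have hlen : b + 1 - a = (c + 1 - a) + (b + 1 - (c + 1)) := by omega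
  have hstart : a + (c + 1 - a) = c + 1 := by omega
  rw [dprod, dprod, dprod, hlen, ← List.range'_append_1, hstart, List.reverse_append,
    List.map_append, List.prod_append]

theorem dprod_add_two (a : ℕ) : dprod X a (a + 2) = X (a + 2) * X (a + 1) * X a := by
  simp [dprod, show a + 2 + 1 - a = 3 by omega, List.range'_succ, mul_assoc]

theorem Commute.dprod_right {g : M} {a b : ℕ} (h : ∀ k, a ≤ k → k ≤ b → Commute g (X k)) :
    Commute g (dprod X a b) :=
  Commute.list_prod_right _ _ <| by
    simp only [List.mem_map, List.mem_reverse, List.mem_range'_1]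
    rintro _ ⟨k, hk, rfl⟩
    exact h k hk.1 (by omega)

theorem map_dprod_s15 {N : Type*} [Monoid N] (f : M →* N) (a b : ℕ) :
    f (dprod X a b) = dprod (fun k => f (X k)) a b := by
  rw [dprod, dprod, map_list_prod, List.map_map]
  rfl

end Dprod

theorem commute_of_dprod_conj_rels {G : Type*} [Group G] {Y : ℕ → G} {x : G} {a K : ℕ}
    (h₁ : Commute (Y a) (Y (a + 1))) (h₂ : Commute (Y a) (Y (a + 2)))
    (h₃ : Commute (Y a * x * (Y a)⁻¹) (Y (a + 2) * Y (a + 1)))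
    (hrel : ∀ k, a + 2 ≤ k → k < K →
      Commute (Y a) ((dprod Y (a + 1) k)⁻¹ * Y (k + 1) * dprod Y (a + 1) k) ∧
      Commute x ((dprod Y a k)⁻¹ * Y (k + 1) * dprod Y a k)) :
    ∀ k, a + 3 ≤ k → k ≤ K → Commute x (Y k) ∧ Commute (Y a) (Y k) := by
  intro k
  induction k using Nat.strong_induction_on with
  | _ k ih =>
  intro hk hkK
  obtain ⟨k, rfl⟩ : ∃ m, k = m + 1 := ⟨k - 1, by omega⟩
  have hy : ∀ m, a + 1 ≤ m → m ≤ k → Commute (Y a) (Y m) := by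
    intro m hm hmk
    obtain rfl | rfl | hm := show m = a + 1 ∨ m = a + 2 ∨ a + 3 ≤ m by omega
    · exact h₁
    · exact h₂
    · exact (ih m (by omega) hm (by omega)).2
  have hx : ∀ m, a + 3 ≤ m → m ≤ k → Commute x (Y m) :=
    fun m hm hmk => (ih m (by omega) hm (by omega)).1
  obtain ⟨hrel_y, hrel_x⟩ := hrel k (by omega) (by omega)
  have hyk : Commute (Y a) (Y (k + 1)) := (Commute.dprod_right Y hy).of_commute_conj hrel_y
  rw [dprod_eq_mul_dprod Y (c := a + 2) (by omega) (by omega), dprod_add_two] at hrel_x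
  refine ⟨Commute.of_commute_conj_of_conj_commute h₃ (Commute.dprod_right Y hx)
    (Commute.dprod_right Y fun m hm hmk => hy m (by omega) hmk) hyk hrel_x, hyk⟩

section CycRels

variable {α : Type*} {rels : Set (FreeGroup α)}

theorem PresentedGroup.mk_rotate_eq_of_cycRels_subset {l : List (FreeGroup α)}
    (h : cycRels l ⊆ rels) (k : ℕ) :
    PresentedGroup.mk rels (l.rotate k).reverse.prod = PresentedGroup.mk rels l.reverse.prod :=
  PresentedGroup.mk_eq_mk_of_mul_inv_mem (h ⟨k, rfl⟩)

theorem PresentedGroup.commute_of_cycRels_pair_subset {a b : FreeGroup α}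
    (h : cycRels [a, b] ⊆ rels) :
    Commute (PresentedGroup.mk rels a) (PresentedGroup.mk rels b) := by
  simpa [Commute, SemiconjBy] using PresentedGroup.mk_rotate_eq_of_cycRels_subset h 1

theorem PresentedGroup.commute_of_cycRels_triple_subset {a b c : FreeGroup α}
    (h : cycRels [a, b, c] ⊆ rels) :
    Commute (PresentedGroup.mk rels a) (PresentedGroup.mk rels c * PresentedGroup.mk rels b) := by
  simpa [Commute, SemiconjBy, mul_assoc] using
    PresentedGroup.mk_rotate_eq_of_cycRels_subset h 1

end CycRels

theorem mem_QIdx {n i j : ℕ} (hi : 1 ≤ i) (hij : i + 2 ≤ j) (hjn : j ≤ n - 2) :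
    (i, j) ∈ QIdx n := by
  simp only [QIdx, Set.mem_ofPred_eq, ne_eq, Prod.mk.injEq, not_and]
  omega

section Horig

variable (n : ℕ)

theorem commute_genH_conj_dprod {a u v w : ℕ}
    (h : cycRels [gen (2 * n) a,
      (dprod (gen (2 * n)) u v)⁻¹ * gen (2 * n) w * dprod (gen (2 * n)) u v] ⊆ Horig n) :
    Commute (genH n a) ((dprod (genH n) u v)⁻¹ * genH n w * dprod (genH n) u v) := by
  have hmk := PresentedGroup.commute_of_cycRels_pair_subset h
  rw [map_mul, map_mul, map_inv, map_dprod_s15] at hmk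
  exact hmk

theorem genH_Q2_rels {i j : ℕ} (hp : (i, j) ∈ QIdx n) :
    Commute (genH n (2 * i)) ((dprod (genH n) (2 * i + 1) (2 * j - 1))⁻¹ * genH n (2 * j) *
        dprod (genH n) (2 * i + 1) (2 * j - 1)) ∧
    Commute (genH n (2 * i - 1)) ((dprod (genH n) (2 * i) (2 * j - 1))⁻¹ * genH n (2 * j) *
        dprod (genH n) (2 * i) (2 * j - 1)) ∧
    Commute (genH n (2 * i)) ((dprod (genH n) (2 * i + 1) (2 * j - 2))⁻¹ * genH n (2 * j - 1) *
        dprod (genH n) (2 * i + 1) (2 * j - 2)) ∧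
    Commute (genH n (2 * i - 1)) ((dprod (genH n) (2 * i) (2 * j - 2))⁻¹ * genH n (2 * j - 1) *
        dprod (genH n) (2 * i) (2 * j - 2)) := by
  refine ⟨commute_genH_conj_dprod n ?_, commute_genH_conj_dprod n ?_,
    commute_genH_conj_dprod n ?_, commute_genH_conj_dprod n ?_⟩ <;>
  · intro r hr
    simp only [Horig, Set.mem_union, Set.mem_iUnion]
    exact Or.inl (Or.inl (Or.inl (Or.inl (Or.inr ⟨(i, j), hp, by tauto⟩))))

theorem genH_T2_rels {i : ℕ} (hi : i ∈ Set.Icc 1 (n - 3)) :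
    Commute (genH n (2 * i)) (genH n (2 * i + 1)) ∧
    Commute (genH n (2 * i)) (genH n (2 * i + 2)) ∧
    Commute (genH n (2 * i) * genH n (2 * i - 1) * (genH n (2 * i))⁻¹)
      (genH n (2 * i + 2) * genH n (2 * i + 1)) := by
  have hsub : ∀ l, (cycRels l ⊆ cycRels [gen (2 * n) (2 * i) * gen (2 * n) (2 * i - 1) *
      (gen (2 * n) (2 * i))⁻¹, gen (2 * n) (2 * i + 1), gen (2 * n) (2 * i + 2)] ∪
      cycRels [gen (2 * n) (2 * i), gen (2 * n) (2 * i + 2)] ∪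
      cycRels [gen (2 * n) (2 * i), gen (2 * n) (2 * i + 1)]) → cycRels l ⊆ Horig n := by
    intro l hl r hr
    simp only [Horig, Set.mem_union, Set.mem_iUnion]
    exact Or.inl (Or.inl (Or.inr ⟨i, hi, hl hr⟩))
  refine ⟨PresentedGroup.commute_of_cycRels_pair_subset (hsub _ ?_),
    PresentedGroup.commute_of_cycRels_pair_subset (hsub _ ?_), ?_⟩
  · exact Set.subset_union_right
  · exact Set.subset_union_right.trans Set.subset_union_left
  · simpa only [genH, map_mul, map_inv] using PresentedGroup.commute_of_cycRels_triple_subset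
      (hsub _ (Set.subset_union_left.trans Set.subset_union_left))

theorem genH_dprod_conj_rels {i k : ℕ} (hi : 1 ≤ i) (hk : 2 * i + 2 ≤ k)
    (hkn : k < 2 * (n - 2)) :
    Commute (genH n (2 * i))
      ((dprod (genH n) (2 * i + 1) k)⁻¹ * genH n (k + 1) * dprod (genH n) (2 * i + 1) k) ∧
    Commute (genH n (2 * i - 1))
      ((dprod (genH n) (2 * i) k)⁻¹ * genH n (k + 1) * dprod (genH n) (2 * i) k) := by
  obtain ⟨j, hkj⟩ : ∃ j, k = 2 * j - 1 ∨ k = 2 * j - 2 := ⟨(k + 2) / 2, by omega⟩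
  obtain ⟨h₁, h₂, h₃, h₄⟩ := genH_Q2_rels n (mem_QIdx (j := j) hi (by omega) (by omega))
  obtain rfl | rfl := hkj
  · rw [show 2 * j - 1 + 1 = 2 * j by omega]
    exact ⟨h₁, h₂⟩
  · rw [show 2 * j - 2 + 1 = 2 * j - 1 by omega]
    exact ⟨h₃, h₄⟩

end Horig

theorem Q2_simplified_general (n : ℕ) (i j : ℕ)
    (hij : 1 ≤ i ∧ i < j ∧ j ≤ n - 2 ∧ 2 ≤ j - i) :
    ∀ a ∈ ({2 * i - 1, 2 * i} : Set ℕ), ∀ b ∈ ({2 * j - 1, 2 * j} : Set ℕ),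
      genH n a * genH n b = genH n b * genH n a := by
  obtain ⟨hi, -, hjn, hji⟩ := hij
  obtain ⟨hT₁, hT₂, hT₃⟩ := genH_T2_rels n (i := i) (by simp only [Set.mem_Icc]; omega)
  have hcomm := commute_of_dprod_conj_rels (K := 2 * (n - 2)) hT₁ hT₂ hT₃
    fun k hk hkn => genH_dprod_conj_rels n hi hk hkn
  rintro a (rfl | rfl) b (rfl | rfl)
  · exact (hcomm _ (by omega) (by omega)).1.eq
  · exact (hcomm _ (by omega) (by omega)).1.eq
  · exact (hcomm _ (by omega) (by omega)).2.eq
  · exact (hcomm _ (by omega) (by omega)).2.eq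

/-- In `H(n) = ⟨x₁,…,x₂ₙ ∣ H_orig(n)⟩`, for all `1 ≤ i < j ≤ n-2` with `j - i ≥ 2`,
each of `x₂ᵢ₋₁, x₂ᵢ` commutes with each of `x₂ⱼ₋₁, x₂ⱼ`. -/
theorem Q2_simplified (n : ℕ) (hn : 4 ≤ n) (i j : ℕ)
    (hij : 1 ≤ i ∧ i < j ∧ j ≤ n - 2 ∧ 2 ≤ j - i) :
    ∀ a ∈ ({2 * i - 1, 2 * i} : Set ℕ), ∀ b ∈ ({2 * j - 1, 2 * j} : Set ℕ),
      genH n a * genH n b = genH n b * genH n a :=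
  Q2_simplified_general n i j hij
end
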